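/- Let μ be a probability measure on (0,∞) with Laplace transform φ(x) = ∫₀^∞ e^{−xs} dμ(s), which is a continuous strictly decreasing bijection from [0,∞) onto (0,1], with inverse φ^{−1}. Let M have law μ and let E be an Exp(1) random variable independent of M. Then φ(E/M) is uniformly distributed on [0,1]: P(φ(E/M) ≤ u) = u for every u ∈ [0,1]. (The margins produced by the Marshall–Olkin sampler are uniform, so the construction yields a valid copula.) -/

import Mathlib

open MeasureTheory Set Filter Topology

/-!
On `[0, ∞)` the Laplace transform `φ` is continuous and strictly decreasing from `φ 0 = 1` to
`0`, so every `u ∈ (0, 1]` is `φ x` for some `x ≥ 0`, and almost surely `φ (E / M) ≤ φ x` iff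
`x M ≤ E`. Integrating the tail `P (E ≥ t) = e^{-t}` against the law of the independent `M`
gives `P (x M ≤ E) = ∫ e^{-x m} dμ(m) = φ x = u`.
-/

theorem integral_pos_of_ae_pos {α : Type*} [MeasurableSpace α] {μ : Measure α} [NeZero μ]
    {f : α → ℝ} (hfi : Integrable f μ) (hf : ∀ᵐ a ∂μ, 0 < f a) : 0 < ∫ a, f a ∂μ := by
  rw [integral_pos_iff_support_of_nonneg_ae (hf.mono fun _ h => h.le) hfi]
  have hsupp : Function.support f =ᵐ[μ] (univ : Set α) :=
    ae_eq_univ.mpr (measure_mono_null (fun a ha => by simp_all) (ae_iff.mp hf))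
  rw [measure_congr hsupp]
  exact Measure.measure_univ_pos.mpr (NeZero.ne μ)

lemma norm_exp_neg_mul_le_one {x s : ℝ} (hx : 0 ≤ x) (hs : 0 ≤ s) :
    ‖Real.exp (-(x * s))‖ ≤ 1 := by
  rw [Real.norm_of_nonneg (Real.exp_pos _).le, Real.exp_le_one_iff, neg_nonpos]
  exact mul_nonneg hx hs

lemma integrable_exp_neg_mul {μ : Measure ℝ} [IsFiniteMeasure μ] (hμ : ∀ᵐ s ∂μ, 0 ≤ s)
    {x : ℝ} (hx : 0 ≤ x) : Integrable (fun s => Real.exp (-(x * s))) μ :=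
  Integrable.mono' (integrable_const 1) (by fun_prop)
    (hμ.mono fun _ hs => norm_exp_neg_mul_le_one hx hs)

noncomputable def laplaceTransform (μ : Measure ℝ) (x : ℝ) : ℝ :=
  ∫ s, Real.exp (-(x * s)) ∂μ

namespace laplaceTransform

variable {μ : Measure ℝ}

lemma zero [IsProbabilityMeasure μ] : laplaceTransform μ 0 = 1 := by
  simp [laplaceTransform]

variable [IsFiniteMeasure μ]

lemma pos [NeZero μ] (hμ : ∀ᵐ s ∂μ, 0 ≤ s) {x : ℝ} (hx : 0 ≤ x) : 0 < laplaceTransform μ x :=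
  integral_exp_pos (integrable_exp_neg_mul hμ hx)

lemma strictAntiOn [NeZero μ] (hμ : ∀ᵐ s ∂μ, 0 < s) :
    StrictAntiOn (laplaceTransform μ) (Ici 0) := by
  intro x hx y hy hxy
  have hμ' : ∀ᵐ s ∂μ, 0 ≤ s := hμ.mono fun _ hs => hs.le
  have hint_x := integrable_exp_neg_mul hμ' hx
  have hint_y := integrable_exp_neg_mul hμ' hy
  have hdiff : 0 < ∫ s, (Real.exp (-(x * s)) - Real.exp (-(y * s))) ∂μ :=
    integral_pos_of_ae_pos (hint_x.sub hint_y) (hμ.mono fun s hs => by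
      simpa using Real.exp_lt_exp.mpr (neg_lt_neg (mul_lt_mul_of_pos_right hxy hs)))
  rw [integral_sub hint_x hint_y] at hdiff
  exact sub_pos.mp hdiff

lemma continuousOn (hμ : ∀ᵐ s ∂μ, 0 ≤ s) : ContinuousOn (laplaceTransform μ) (Ici 0) :=
  continuousOn_of_dominated (fun _ _ => by fun_prop)
    (fun _ hx => hμ.mono fun _ hs => norm_exp_neg_mul_le_one hx hs) (integrable_const 1)
    (ae_of_all _ fun _ => by fun_prop)

lemma tendsto_atTop (hμ : ∀ᵐ s ∂μ, 0 < s) : Tendsto (laplaceTransform μ) atTop (𝓝 0) := by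
  have h := tendsto_integral_filter_of_dominated_convergence (μ := μ) (l := atTop)
    (F := fun x s => Real.exp (-(x * s))) (f := fun _ => 0) (fun _ => 1)
    (Eventually.of_forall fun _ => by fun_prop)
    ((eventually_ge_atTop 0).mono fun _ hx => hμ.mono fun _ hs => norm_exp_neg_mul_le_one hx hs.le)
    (integrable_const 1)
    (hμ.mono fun _ hs => Real.tendsto_exp_atBot.comp
      (tendsto_neg_atTop_atBot.comp (tendsto_id.atTop_mul_const hs)))
  rw [integral_zero] at h
  exact h

lemma exists_eq [IsProbabilityMeasure μ] (hμ : ∀ᵐ s ∂μ, 0 < s) {u : ℝ} (hu : u ∈ Ioc 0 1) :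
    ∃ x, 0 ≤ x ∧ laplaceTransform μ x = u := by
  obtain ⟨R, hRu, hR⟩ :=
    ((tendsto_atTop hμ).eventually (Iio_mem_nhds hu.1)).and (eventually_ge_atTop 0) |>.exists
  obtain ⟨x, hx, hxu⟩ := intermediate_value_Icc' hR
    ((continuousOn (hμ.mono fun _ hs => hs.le)).mono Icc_subset_Ici_self)
    ⟨le_of_lt hRu, zero (μ := μ) ▸ hu.2⟩
  exact ⟨x, hx.1, hxu⟩

end laplaceTransform

lemma measure_Ici_eq_measure_Ioi_of_tendsto {ν : Measure ℝ} {t : ℝ}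
    (h : Tendsto (fun s => ν (Ioi s)) (𝓝[<] t) (𝓝 (ν (Ioi t)))) : ν (Ici t) = ν (Ioi t) :=
  le_antisymm
    (ge_of_tendsto h <| eventually_nhdsWithin_of_forall fun _ hs =>
      measure_mono (Ici_subset_Ioi.mpr hs))
    (measure_mono Ioi_subset_Ici_self)

lemma measure_Ici_eq_exp_neg {ν : Measure ℝ} [IsProbabilityMeasure ν]
    (hν : ∀ t ≥ (0 : ℝ), ν (Ioi t) = ENNReal.ofReal (Real.exp (-t))) {t : ℝ} (ht : 0 ≤ t) :
    ν (Ici t) = ENNReal.ofReal (Real.exp (-t)) := by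
  rcases ht.eq_or_lt with rfl | ht
  · refine le_antisymm ?_ ?_
    · simpa using prob_le_one
    · exact hν 0 le_rfl ▸ measure_mono Ioi_subset_Ici_self
  · have hcont : Tendsto (fun s => ENNReal.ofReal (Real.exp (-s))) (𝓝[<] t)
        (𝓝 (ENNReal.ofReal (Real.exp (-t)))) :=
      (ENNReal.continuous_ofReal.comp (by fun_prop)).continuousWithinAt
    have htail : Tendsto (fun s => ν (Ioi s)) (𝓝[<] t) (𝓝 (ν (Ioi t))) := by
      rw [hν t ht.le]
      exact hcont.congr' (eventually_of_mem (Ioo_mem_nhdsLT ht) fun s hs => (hν s hs.1.le).symm)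
    rw [measure_Ici_eq_measure_Ioi_of_tendsto htail, hν t ht.le]

lemma measure_mul_le_eq_laplaceTransform {Ω : Type*} [MeasurableSpace Ω] {P : Measure Ω}
    [IsFiniteMeasure P] {M E : Ω → ℝ} (hM : Measurable M) (hE : Measurable E)
    (hindep : ProbabilityTheory.IndepFun E M P) (hM_nonneg : ∀ᵐ s ∂(P.map M), 0 ≤ s)
    (hE_tail : ∀ t ≥ (0 : ℝ), P.map E (Ici t) = ENNReal.ofReal (Real.exp (-t)))
    {x : ℝ} (hx : 0 ≤ x) :
    P {ω | x * M ω ≤ E ω} = ENNReal.ofReal (laplaceTransform (P.map M) x) := by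
  have hS : MeasurableSet {p : ℝ × ℝ | x * p.1 ≤ p.2} :=
    measurableSet_le (by fun_prop) (by fun_prop)
  have hjoint : P.map (fun ω => (M ω, E ω)) = (P.map M).prod (P.map E) :=
    (ProbabilityTheory.indepFun_iff_map_prod_eq_prod_map_map hM.aemeasurable
      hE.aemeasurable).mp hindep.symm
  calc P {ω | x * M ω ≤ E ω} = P.map (fun ω => (M ω, E ω)) {p | x * p.1 ≤ p.2} :=
        (Measure.map_apply (hM.prodMk hE) hS).symm
    _ = ∫⁻ m, P.map E (Ici (x * m)) ∂(P.map M) := by rw [hjoint, Measure.prod_apply hS]; rfl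
    _ = ∫⁻ m, ENNReal.ofReal (Real.exp (-(x * m))) ∂(P.map M) :=
        lintegral_congr_ae (hM_nonneg.mono fun m hm => hE_tail _ (mul_nonneg hx hm))
    _ = ENNReal.ofReal (laplaceTransform (P.map M) x) :=
        (ofReal_integral_eq_lintegral_ofReal (integrable_exp_neg_mul hM_nonneg hx)
          (ae_of_all _ fun _ => (Real.exp_pos _).le)).symm

/-- The margins produced by the Marshall–Olkin sampler are uniform: if `μ` is a
probability measure on `(0,∞)` with Laplace transform `φ`, `M ~ μ`, and `E ~ Exp(1)`
independent of `M`, then `P(φ(E/M) ≤ u) = u` for every `u ∈ [0,1]`. -/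
theorem marshall_olkin_margin_uniform
    (μ : Measure ℝ) [IsProbabilityMeasure μ]
    (hsupp : μ {s | s ≤ 0} = 0)
    (φ : ℝ → ℝ)
    (hφ : ∀ x, φ x = ∫ s, Real.exp (-(x * s)) ∂μ)
    {Ω : Type*} [MeasurableSpace Ω] (P : Measure Ω) [IsProbabilityMeasure P]
    (M : Ω → ℝ) (hMmeas : Measurable M)
    (hM : P.map M = μ)
    (E : Ω → ℝ) (hEmeas : Measurable E)
    (hE : ∀ t ≥ (0 : ℝ), P {ω | t < E ω} = ENNReal.ofReal (Real.exp (-t)))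
    (hindep : ProbabilityTheory.IndepFun E M P) :
    ∀ u ∈ Icc (0 : ℝ) 1,
      P {ω | φ (E ω / M ω) ≤ u} = ENNReal.ofReal u := by
  obtain rfl : φ = laplaceTransform μ := funext hφ
  have hμ_pos : ∀ᵐ s ∂μ, 0 < s := by simpa [ae_iff] using hsupp
  have hμ_nonneg : ∀ᵐ s ∂μ, 0 ≤ s := hμ_pos.mono fun _ hs => hs.le
  have hM_pos : ∀ᵐ ω ∂P, 0 < M ω := ae_of_ae_map hMmeas.aemeasurable (hM ▸ hμ_pos)
  have hE_pos : ∀ᵐ ω ∂P, 0 < E ω :=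
    (ae_iff_measure_eq (measurableSet_lt measurable_const hEmeas).nullMeasurableSet).mpr
      (by rw [measure_univ, hE 0 le_rfl]; simp)
  have hratio : ∀ᵐ ω ∂P, 0 ≤ E ω / M ω := by
    filter_upwards [hM_pos, hE_pos] with ω hMω hEω using div_nonneg hEω.le hMω.le
  have := Measure.isProbabilityMeasure_map (μ := P) hEmeas.aemeasurable
  have hE_tail : ∀ t ≥ (0 : ℝ), P.map E (Ici t) = ENNReal.ofReal (Real.exp (-t)) :=
    fun _ => measure_Ici_eq_exp_neg fun t ht => by
      rw [Measure.map_apply hEmeas measurableSet_Ioi]; exact hE t ht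
  intro u hu
  rcases hu.1.eq_or_lt with rfl | hu_pos
  · rw [ENNReal.ofReal_zero, measure_eq_zero_iff_ae_notMem]
    filter_upwards [hratio] with ω h using
      (laplaceTransform.pos hμ_nonneg h).not_ge
  · obtain ⟨x, hx, rfl⟩ := laplaceTransform.exists_eq hμ_pos ⟨hu_pos, hu.2⟩
    have hevent : {ω | laplaceTransform μ (E ω / M ω) ≤ laplaceTransform μ x}
        =ᵐ[P] {ω | x * M ω ≤ E ω} := by
      filter_upwards [hM_pos, hratio] with ω hMω hω
      exact propext <| ((laplaceTransform.strictAntiOn hμ_pos).le_iff_ge hω hx).trans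
        (le_div_iff₀ hMω)
    rw [measure_congr hevent, measure_mul_le_eq_laplaceTransform hMmeas hEmeas hindep
      (hM ▸ hμ_nonneg) hE_tail hx, hM]
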